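/- arXiv:2107.08320 — 7 statements merged into one kernel-verified Lean document; each statement's English description precedes it below -/
import Mathlib

section
/- Let k be a field of characteristic p > 0 and let K be a separable algebraic field extension of k. Let H ∈ k[X_1,…,X_n] be a p-polynomial of the form H = ∑_{i=1}^n c_i X_i^{p^{n_i}} with c_i ∈ k and n_i ≥ 0. Then H has no nontrivial zeroes over k (i.e., the only tuple (x_1,…,x_n) ∈ k^n with H(x_1,…,x_n) = 0 is (0,…,0)) if and only if H has no nontrivial zeroes over K (i.e., the only tuple in K^n on which H vanishes is (0,…,0)). -/
open Algebra in
lemma trace_pow_mul_eq_zero_aux {k L : Type*} [Field k] [Field L] [Algebra k L]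
    [FiniteDimensional k L] [Algebra.IsSeparable k L] (p : ℕ) [Fact (Nat.Prime p)] [CharP k p]
    (m : ℕ) (a : L) (h : ∀ s : L, Algebra.trace k L (s ^ p ^ m * a) = 0) : a = 0 := by
  let F := AlgebraicClosure L
  haveI : CharP L p := charP_of_injective_algebraMap (algebraMap k L).injective p
  haveI : CharP F p := charP_of_injective_algebraMap (algebraMap L F).injective p
  have key : ∀ s : L, ∑ σ : L →ₐ[k] F, σ a * (σ s) ^ p ^ m = 0 := by
    intro s
    have h2 := trace_eq_sum_embeddings (E := F) (K := k) (L := L) (x := s ^ p ^ m * a)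
    rw [h s, map_zero] at h2
    have h3 : ∑ σ : L →ₐ[k] F, σ (s ^ p ^ m * a) = ∑ σ : L →ₐ[k] F, σ a * (σ s) ^ p ^ m := by
      refine Finset.sum_congr rfl fun σ _ => ?_
      rw [map_mul, map_pow, mul_comm]
    rw [← h3, ← h2]
  -- the family of monoid homs s ↦ (σ s) ^ p ^ m
  let f : (L →ₐ[k] F) → (L →* F) := fun σ => (powMonoidHom (p ^ m)).comp (σ : L →* F)
  have hinj : Function.Injective f := by
    intro σ τ hst
    ext x
    have hx : (σ x) ^ p ^ m = (τ x) ^ p ^ m := by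
      have := DFunLike.congr_fun hst x
      simpa [f, powMonoidHom] using this
    have h0 : (σ x - τ x) ^ p ^ m = 0 := by rw [sub_pow_char_pow, hx, sub_self]
    have := pow_eq_zero_iff (n := p ^ m)
      (pow_ne_zero m (Fact.out : p.Prime).ne_zero) |>.mp h0
    exact sub_eq_zero.mp this
  have li := (linearIndependent_monoidHom L F).comp f hinj
  rw [Fintype.linearIndependent_iff] at li
  have hall := li (fun σ => σ a) ?_
  · have σ0 : L →ₐ[k] F := IsScalarTower.toAlgHom k L F
    have := hall σ0
    exact (map_eq_zero σ0).mp this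
  · funext s
    have := key s
    simpa [f, Finset.sum_apply, powMonoidHom, smul_eq_mul] using this

set_option maxHeartbeats 1000000 in
set_option synthInstance.maxHeartbeats 400000 in
/-- **No nontrivial zeroes of a p-polynomial principal part is invariant under separable
algebraic extensions.**  Let `k` be a field of characteristic `p > 0`, `K/k` a separable
algebraic field extension, and `H = ∑ i, c i * X i ^ p ^ (e i)` a `p`-polynomial with
coefficients `c i ∈ k`.  Then `H` has no nontrivial zeroes over `k` if and only if it has
no nontrivial zeroes over `K`. -/
theorem pPolynomial_no_nontrivial_zeroes_iff_separable {k K : Type*} [Field k] [Field K]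
    (p : ℕ) (hp : 0 < p) [CharP k p]
    [Algebra k K] [Algebra.IsSeparable k K] [Algebra.IsAlgebraic k K]
    {n : ℕ} (c : Fin n → k) (e : Fin n → ℕ) :
    (∀ x : Fin n → k, ∑ i, c i * x i ^ p ^ e i = 0 → x = 0) ↔
      (∀ y : Fin n → K, ∑ i, algebraMap k K (c i) * y i ^ p ^ e i = 0 → y = 0) := by
  haveI : NeZero p := ⟨hp.ne'⟩
  haveI : Fact p.Prime := CharP.char_is_prime_of_pos k p
  constructor
  · -- hard direction
    intro hk y hy
    haveI : Finite (Set.range y) := (Set.finite_range y).to_subtype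
    let L := IntermediateField.adjoin k (Set.range y)
    haveI : FiniteDimensional k L :=
      IntermediateField.finiteDimensional_adjoin
        (fun x _ => (Algebra.IsIntegral.isIntegral (R := k) x))
    haveI : Algebra.IsSeparable k L := Algebra.isSeparable_tower_bot_of_isSeparable k L K
    set yL : Fin n → L := fun i => ⟨y i, IntermediateField.subset_adjoin k _ ⟨i, rfl⟩⟩ with hyLdef
    have hyL : ∑ i, algebraMap k L (c i) * (yL i) ^ p ^ e i = 0 := by
      apply (algebraMap L K).injective
      rw [map_sum, map_zero, ← hy]
      refine Finset.sum_congr rfl fun i _ => ?_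
      rw [map_mul, map_pow, ← IsScalarTower.algebraMap_apply]
      rfl
    let F := AlgebraicClosure L
    haveI : CharP L p := charP_of_injective_algebraMap (algebraMap k L).injective p
    haveI : CharP F p := charP_of_injective_algebraMap (algebraMap L F).injective p
    have hσ : ∀ σ : L →ₐ[k] F, ∑ i, algebraMap k F (c i) * (σ (yL i)) ^ p ^ e i = 0 := by
      intro σ
      have h1 := congrArg σ hyL
      rw [map_sum, map_zero] at h1
      rw [← h1]
      exact Finset.sum_congr rfl fun i _ => by rw [map_mul, map_pow, AlgHom.commutes]
    set E := Finset.univ.sup e with hEdef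
    have hE : ∀ i : Fin n, p ^ (E - e i) * p ^ e i = p ^ E := fun i => by
      rw [← pow_add, Nat.sub_add_cancel (Finset.le_sup (Finset.mem_univ i))]
    have key : ∀ (s : L) (i : Fin n),
        Algebra.trace k L (s ^ p ^ (E - e i) * yL i) = 0 := by
      intro s
      have hz : (fun i => Algebra.trace k L (s ^ p ^ (E - e i) * yL i)) = 0 := by
        apply hk
        apply (algebraMap k F).injective
        rw [map_sum, map_zero]
        have step : ∀ i : Fin n,
            algebraMap k F (c i * Algebra.trace k L (s ^ p ^ (E - e i) * yL i) ^ p ^ e i)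
              = ∑ σ : L →ₐ[k] F,
                  σ s ^ p ^ E * (algebraMap k F (c i) * σ (yL i) ^ p ^ e i) := by
          intro i
          rw [map_mul, map_pow, trace_eq_sum_embeddings (E := F), sum_pow_char_pow,
            Finset.mul_sum]
          refine Finset.sum_congr rfl fun σ _ => ?_
          rw [map_mul, map_pow, mul_pow, ← pow_mul, hE i]
          ring
        calc ∑ i, algebraMap k F (c i * Algebra.trace k L (s ^ p ^ (E - e i) * yL i) ^ p ^ e i)
            = ∑ i, ∑ σ : L →ₐ[k] F,
                σ s ^ p ^ E * (algebraMap k F (c i) * σ (yL i) ^ p ^ e i) :=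
              Finset.sum_congr rfl fun i _ => step i
          _ = ∑ σ : L →ₐ[k] F,
                σ s ^ p ^ E * ∑ i, algebraMap k F (c i) * σ (yL i) ^ p ^ e i := by
              rw [Finset.sum_comm]
              exact Finset.sum_congr rfl fun σ _ => (Finset.mul_sum _ _ _).symm
          _ = 0 := by
              refine Finset.sum_eq_zero fun σ _ => ?_
              rw [hσ σ, mul_zero]
      intro i; exact congrFun hz i
    funext i
    have h0 : yL i = 0 :=
      trace_pow_mul_eq_zero_aux p (E - e i) (yL i) (fun s => key s i)
    have : y i = (yL i : K) := rfl
    rw [Pi.zero_apply, this, h0, ZeroMemClass.coe_zero]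
  · -- easy direction
    intro hK x hx
    have h1 : ∑ i, algebraMap k K (c i) * (algebraMap k K (x i)) ^ p ^ e i = 0 := by
      have : ∑ i, algebraMap k K (c i * x i ^ p ^ e i) = 0 := by
        rw [← map_sum, hx, map_zero]
      simpa [map_mul, map_pow] using this
    have h2 := hK (fun i => algebraMap k K (x i)) h1
    funext i
    have := congrFun h2 i
    exact (algebraMap k K).injective (by simpa using this)
end

section
/- Let k be a field of characteristic p > 0 and let K = k(t_1,…,t_m) be a purely transcendental (rational function) field extension of k. Let H ∈ k[X_1,…,X_n] be a p-polynomial of the form H = ∑_{i=1}^n c_i X_i^{p^{n_i}} with c_i ∈ k and n_i ≥ 0. If H has no nontrivial zeroes over k (i.e., the only tuple (x_1,…,x_n) ∈ k^n with H(x_1,…,x_n) = 0 is (0,…,0)), then H has no nontrivial zeroes over K (i.e., the only tuple in K^n on which H vanishes is (0,…,0)). -/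
open MvPolynomial

private lemma smul_finsupp_inj {σ : Type*} {q : ℕ} (hq : 0 < q) {ν ν' : σ →₀ ℕ}
    (h : q • ν = q • ν') : ν = ν' := by
  ext a
  have := DFunLike.congr_fun h a
  simp only [Finsupp.smul_apply, smul_eq_mul] at this
  exact Nat.eq_of_mul_eq_mul_left hq this

private lemma pow_char_pow_as_sum {σ R : Type*} [CommSemiring R] {p : ℕ} [CharP R p]
    [Fact p.Prime]
    (E : ℕ) (F : MvPolynomial σ R) :
    F ^ p ^ E = ∑ ν ∈ F.support, monomial (p ^ E • ν) (coeff ν F ^ p ^ E) := by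
  conv_lhs => rw [F.as_sum]
  rw [sum_pow_char_pow]
  exact Finset.sum_congr rfl fun ν _ => monomial_pow

private lemma coeff_pow_char_pow {σ R : Type*} [CommSemiring R] {p : ℕ} (hp : 0 < p)
    [CharP R p] [Fact p.Prime] (E : ℕ) (F : MvPolynomial σ R) (ν : σ →₀ ℕ) :
    coeff (p ^ E • ν) (F ^ p ^ E) = coeff ν F ^ p ^ E := by
  classical
  rw [pow_char_pow_as_sum, coeff_sum]
  simp only [coeff_monomial]
  have hstep : ∀ ν' ∈ F.support,
      (if p ^ E • ν' = p ^ E • ν then coeff ν' F ^ p ^ E else 0)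
        = (if ν' = ν then coeff ν' F ^ p ^ E else 0) := by
    intro ν' _
    exact if_congr ⟨fun h => smul_finsupp_inj (pow_pos hp E) h, fun h => by rw [h]⟩ rfl rfl
  rw [Finset.sum_congr rfl hstep, Finset.sum_ite_eq' F.support ν (fun ν' => coeff ν' F ^ p ^ E)]
  by_cases hν : ν ∈ F.support
  · rw [if_pos hν]
  · rw [if_neg hν, notMem_support_iff.mp hν, zero_pow (pow_pos hp E).ne']

private lemma coeff_pow_char_pow_zero {σ R : Type*} [CommSemiring R] {p : ℕ}
    [CharP R p] [Fact p.Prime] (E : ℕ) (F : MvPolynomial σ R) (μ : σ →₀ ℕ)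
    (h : ¬ ∃ ν, p ^ E • ν = μ) : coeff μ (F ^ p ^ E) = 0 := by
  classical
  rw [pow_char_pow_as_sum, coeff_sum]
  refine Finset.sum_eq_zero fun ν _ => ?_
  rw [coeff_monomial, if_neg fun hc => h ⟨ν, hc⟩]

/-- **No nontrivial zeroes of a p-polynomial principal part is preserved by purely
transcendental extensions.**  Let `k` be a field of characteristic `p > 0` and
`K = k(t_1,…,t_m)` the rational function field, realized as the fraction field of the
polynomial ring `k[t_1,…,t_m]`.  If the `p`-polynomial `H = ∑ i, c i * X i ^ p ^ (e i)`
(with `c i ∈ k`) has no nontrivial zeroes over `k`, then it has no nontrivial zeroes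
over `K`. -/
theorem pPolynomial_no_nontrivial_zeroes_rationalFunctionField {k : Type*} [Field k]
    (p : ℕ) (hp : 0 < p) [CharP k p] (m : ℕ)
    {n : ℕ} (c : Fin n → k) (e : Fin n → ℕ)
    (hk : ∀ x : Fin n → k, ∑ i, c i * x i ^ p ^ e i = 0 → x = 0) :
    ∀ y : Fin n → FractionRing (MvPolynomial (Fin m) k),
      ∑ i, algebraMap (MvPolynomial (Fin m) k) (FractionRing (MvPolynomial (Fin m) k))
          (MvPolynomial.C (c i)) * y i ^ p ^ e i = 0 → y = 0 := by
  classical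
  haveI : NeZero p := ⟨hp.ne'⟩
  haveI : Fact p.Prime := CharP.char_is_prime_of_pos k p
  set R := MvPolynomial (Fin m) k with hR
  set K := FractionRing R with hK
  intro y hy
  -- clear denominators
  obtain ⟨b, hb⟩ := IsLocalization.exist_integer_multiples (nonZeroDivisors R) Finset.univ y
  choose r hr using fun i => hb i (Finset.mem_univ i)
  set E := Finset.univ.sup e with hE
  have heE : ∀ i, e i ≤ E := fun i => Finset.le_sup (Finset.mem_univ i)
  set F : Fin n → R := fun i => (b : R) ^ (p ^ (E - e i) - 1) * r i with hFdef
  have hF : ∀ i, algebraMap R K (F i) = algebraMap R K (b : R) ^ p ^ (E - e i) * y i := by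
    intro i
    have h1 : p ^ (E - e i) = (p ^ (E - e i) - 1) + 1 :=
      (Nat.succ_pred_eq_of_pos (pow_pos hp _)).symm
    rw [hFdef]
    simp only [map_mul, map_pow]
    rw [hr i, Algebra.smul_def, ← mul_assoc, ← pow_succ, ← h1]
  -- the cleared equation over R
  have key : ∑ i, MvPolynomial.C (c i) * F i ^ p ^ e i = 0 := by
    apply IsFractionRing.injective R K
    rw [map_zero, map_sum]
    have : ∀ i ∈ Finset.univ, algebraMap R K (MvPolynomial.C (c i) * F i ^ p ^ e i)
        = algebraMap R K (b : R) ^ p ^ E *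
          (algebraMap R K (MvPolynomial.C (c i)) * y i ^ p ^ e i) := by
      intro i _
      rw [map_mul, map_pow, hF i, mul_pow, ← pow_mul, ← pow_add,
        Nat.sub_add_cancel (heE i)]
      ring
    rw [Finset.sum_congr rfl this, ← Finset.mul_sum, hy, mul_zero]
  -- coefficientwise argument : F i = 0
  have hFzero : ∀ i, F i = 0 := by
    intro i
    ext ν
    rw [coeff_zero]
    obtain ⟨μ, hμ⟩ : ∃ μ : Fin m →₀ ℕ, p ^ e i • ν = μ := ⟨_, rfl⟩
    set x : Fin n → k := fun j =>
      if h : ∃ ν', p ^ e j • ν' = μ then coeff h.choose (F j) else 0 with hx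
    have hxeq : ∑ j, c j * x j ^ p ^ e j = 0 := by
      have hterm : ∀ j ∈ Finset.univ, c j * x j ^ p ^ e j
          = coeff μ (MvPolynomial.C (c j) * F j ^ p ^ e j) := by
        intro j _
        rw [coeff_C_mul]
        simp only [hx]
        by_cases h : ∃ ν', p ^ e j • ν' = μ
        · rw [dif_pos h]
          have hsp := h.choose_spec
          generalize h.choose = w at hsp ⊢
          rw [← hsp, coeff_pow_char_pow hp]
        · rw [dif_neg h, coeff_pow_char_pow_zero _ _ _ h,
            zero_pow (pow_pos hp _).ne']
      rw [Finset.sum_congr rfl hterm, ← coeff_sum, key, coeff_zero]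
    have hx0 := hk x hxeq
    have hex : ∃ ν', p ^ e i • ν' = μ := ⟨ν, hμ⟩
    have hchoose : hex.choose = ν :=
      smul_finsupp_inj (pow_pos hp _) (hex.choose_spec.trans hμ.symm)
    have hxi := congrFun hx0 i
    simp only [hx, dif_pos hex, hchoose] at hxi
    exact hxi
  -- conclude y = 0
  funext i
  have h0 := hF i
  rw [hFzero i, map_zero] at h0
  have hbne : algebraMap R K (b : R) ≠ 0 := by
    have : (b : R) ≠ 0 := nonZeroDivisors.coe_ne_zero b
    exact fun h => this (IsFractionRing.injective R K (by rw [h, map_zero]))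
  have := pow_ne_zero (p ^ (E - e i)) hbne
  exact (mul_eq_zero.mp h0.symm).resolve_left this
end

section
/- Let R be a commutative ring of characteristic p > 0 and let a ∈ R. Define V(R) := {(x,y) ∈ R² : x^{p²} − x + a·y^{p²} = 0}, U(R) := {(x,y) ∈ R² : x^p − x + a·y^p = 0}, and W(R) := {(x,y) ∈ R² : x^{p²} − x + a·y^p = 0}; each of these is a subgroup of (R², +). Define b((x',y'), (x,y)) := (x·(x')^p + x^p·x', x·y' + x'·y^p). Then for all (x',y') ∈ W(R) and (x,y) ∈ V(R), the pair b((x',y'), (x,y)) lies in U(R), and b is bi-additive: additive in each of its two arguments separately. -/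
section

variable {R : Type*} [CommRing R] (p : ℕ) (a : R)

/-- The points of `V = {X^{p²} - X + a Y^{p²} = 0} ⊆ 𝔾ₐ²` with values in `R`. -/
def Vset : Set (R × R) := {v | v.1 ^ p ^ 2 - v.1 + a * v.2 ^ p ^ 2 = 0}

/-- The points of `U = {X^p - X + a Y^p = 0} ⊆ 𝔾ₐ²` with values in `R`. -/
def Uset : Set (R × R) := {v | v.1 ^ p - v.1 + a * v.2 ^ p = 0}

/-- The points of `W = {X^{p²} - X + a Y^p = 0} ⊆ 𝔾ₐ²` with values in `R`. -/
def Wset : Set (R × R) := {v | v.1 ^ p ^ 2 - v.1 + a * v.2 ^ p = 0}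

/-- The pairing `b((x',y'), (x,y)) = (x (x')^p + x^p x', x y' + x' y^p)`. -/
def bPair : R × R → R × R → R × R := fun w v =>
  (v.1 * w.1 ^ p + v.1 ^ p * w.1, v.1 * w.2 + w.1 * v.2 ^ p)

end

/-- **The pairing `b : W × V → U` is well defined and bi-additive.**
Let `R` be a commutative ring of characteristic `p > 0` (`p` prime) and `a ∈ R`.  The sets
`V(R)`, `U(R)`, `W(R)` are subgroups of `(R², +)`; for `(x',y') ∈ W(R)` and `(x,y) ∈ V(R)`
the pair `b((x',y'),(x,y))` lies in `U(R)`; and `b` is additive in each argument. -/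
theorem bPair_mem_Uset_and_biadditive {R : Type*} [CommRing R]
    (p : ℕ) (hp : p.Prime) [CharP R p] (a : R) :
    (∃ G : AddSubgroup (R × R), (G : Set (R × R)) = Vset p a) ∧
    (∃ G : AddSubgroup (R × R), (G : Set (R × R)) = Uset p a) ∧
    (∃ G : AddSubgroup (R × R), (G : Set (R × R)) = Wset p a) ∧
    (∀ w ∈ Wset p a, ∀ v ∈ Vset p a, bPair p w v ∈ Uset p a) ∧
    (∀ w ∈ Wset p a, ∀ w' ∈ Wset p a, ∀ v ∈ Vset p a,
      bPair p (w + w') v = bPair p w v + bPair p w' v) ∧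
    (∀ w ∈ Wset p a, ∀ v ∈ Vset p a, ∀ v' ∈ Vset p a,
      bPair p w (v + v') = bPair p w v + bPair p w v') := by
  haveI := Fact.mk hp
  have hadd : ∀ x y : R, (x + y) ^ p = x ^ p + y ^ p := fun x y => add_pow_char x y p
  have hadd2 : ∀ x y : R, (x + y) ^ p ^ 2 = x ^ p ^ 2 + y ^ p ^ 2 :=
    fun x y => add_pow_char_pow x y p 2
  have hneg : ∀ x : R, (-x) ^ p = -(x ^ p) := by
    intro x; have := sub_pow_char (p := p) (0 : R) x; simpa [zero_pow hp.ne_zero] using this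
  have hneg2 : ∀ x : R, (-x) ^ p ^ 2 = -(x ^ p ^ 2) := by
    intro x; have := sub_pow_char_pow (0 : R) x 2 (p := p)
    simpa [zero_pow (pow_ne_zero 2 hp.ne_zero)] using this
  refine ⟨⟨{ carrier := Vset p a, add_mem' := ?_, zero_mem' := ?_, neg_mem' := ?_ }, rfl⟩,
    ⟨{ carrier := Uset p a, add_mem' := ?_, zero_mem' := ?_, neg_mem' := ?_ }, rfl⟩,
    ⟨{ carrier := Wset p a, add_mem' := ?_, zero_mem' := ?_, neg_mem' := ?_ }, rfl⟩,
    ?_, ?_, ?_⟩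
  · intro u v hu hv
    simp only [Vset, Set.mem_setOf_eq, Prod.fst_add, Prod.snd_add, hadd2] at *
    linear_combination hu + hv
  · simp [Vset, zero_pow (pow_ne_zero 2 hp.ne_zero)]
  · intro u hu
    simp only [Vset, Set.mem_setOf_eq, Prod.fst_neg, Prod.snd_neg, hneg2] at *
    linear_combination -hu
  · intro u v hu hv
    simp only [Uset, Set.mem_setOf_eq, Prod.fst_add, Prod.snd_add, hadd] at *
    linear_combination hu + hv
  · simp [Uset, zero_pow hp.ne_zero]
  · intro u hu
    simp only [Uset, Set.mem_setOf_eq, Prod.fst_neg, Prod.snd_neg, hneg] at *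
    linear_combination -hu
  · intro u v hu hv
    simp only [Wset, Set.mem_setOf_eq, Prod.fst_add, Prod.snd_add, hadd, hadd2] at *
    linear_combination hu + hv
  · simp [Wset, zero_pow hp.ne_zero, zero_pow (pow_ne_zero 2 hp.ne_zero)]
  · intro u hu
    simp only [Wset, Set.mem_setOf_eq, Prod.fst_neg, Prod.snd_neg, hneg, hneg2] at *
    linear_combination -hu
  · intro w hw v hv
    simp only [Wset, Vset, Uset, bPair, Set.mem_setOf_eq] at *
    rw [pow_two] at hw hv
    simp only [hadd, mul_pow, ← pow_mul]
    linear_combination v.1 ^ p * hw + w.1 ^ p * hv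
  · intro w hw w' hw' v hv
    simp only [bPair, Prod.ext_iff, Prod.fst_add, Prod.snd_add, hadd]
    constructor <;> ring
  · intro w hw v hv v' hv'
    simp only [bPair, Prod.ext_iff, Prod.fst_add, Prod.snd_add, hadd]
    constructor <;> ring
end

section
/- Let k be a field of characteristic p > 0, let a ∈ k ∖ k^p, and let K be a field extension of k containing an element b with b^p = a. Let W_a(K) := {(x,y) ∈ K² : x + x^p + a·y^p = 0}, a subgroup of (K², +). Then the maps φ : W_a(K) → K, φ(x,y) = x + b·y, and ψ : K → W_a(K), ψ(t) = (−t^p, b^{-1}·(t + t^p)), are mutually inverse isomorphisms of abelian groups (in particular, ψ(t) does lie in W_a(K) for every t ∈ K). -/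
/-!
Since `p` is the exponential characteristic, `x ↦ xᵖ` and hence `x ↦ x + xᵖ` are additive.
Writing `a = bᵖ`, the defining equation of `W_a` becomes `(x + b y)ᵖ = -x`, so a point of
`W_a(K)` is recovered from `t = x + b y` as `x = -tᵖ`, `y = b⁻¹ (t + tᵖ)`.
-/

section ExpChar

variable {K : Type*} [Field K] {p : ℕ} [ExpChar K p]

lemma neg_pow_expChar (x : K) : (-x) ^ p = -x ^ p := by
  rw [neg_pow, neg_one_pow_expChar, neg_one_mul]

lemma add_add_pow_expChar (x y : K) : x + y + (x + y) ^ p = (x + x ^ p) + (y + y ^ p) := by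
  rw [add_pow_expChar]
  ring

lemma add_mul_pow_expChar_eq_neg {b x y : K} (h : x + x ^ p + b ^ p * y ^ p = 0) :
    (x + b * y) ^ p = -x := by
  rw [add_pow_expChar, mul_pow]
  linear_combination h

lemma neg_pow_add_pow_mul_inv_pow_eq_zero {b : K} (hb : b ≠ 0) (t : K) :
    -t ^ p + (-t ^ p) ^ p + b ^ p * (b⁻¹ * (t + t ^ p)) ^ p = 0 := by
  rw [← mul_pow, mul_inv_cancel_left₀ hb, neg_pow_expChar, add_pow_expChar]
  ring

end ExpChar

theorem Wa_iso_Ga_over_purely_inseparable_general {k K : Type*} [Field k] [Field K]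
    (p : ℕ) [CharP k p] [Algebra k K]
    (a : k) (ha : ∀ c : k, c ^ p ≠ a) (b : K) (hb : b ^ p = algebraMap k K a) :
    (∀ t : K, (-t ^ p, b⁻¹ * (t + t ^ p)) ∈
        {v : K × K | v.1 + v.1 ^ p + algebraMap k K a * v.2 ^ p = 0}) ∧
    (∀ t : K, (-t ^ p : K) + b * (b⁻¹ * (t + t ^ p)) = t) ∧
    (∀ v ∈ {v : K × K | v.1 + v.1 ^ p + algebraMap k K a * v.2 ^ p = 0},
      (-(v.1 + b * v.2) ^ p, b⁻¹ * ((v.1 + b * v.2) + (v.1 + b * v.2) ^ p)) = v) ∧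
    (∀ v ∈ {v : K × K | v.1 + v.1 ^ p + algebraMap k K a * v.2 ^ p = 0},
      ∀ v' ∈ {v : K × K | v.1 + v.1 ^ p + algebraMap k K a * v.2 ^ p = 0},
      (v + v').1 + b * (v + v').2 = (v.1 + b * v.2) + (v'.1 + b * v'.2)) ∧
    (∀ t t' : K,
      ((-(t + t') ^ p, b⁻¹ * ((t + t') + (t + t') ^ p)) : K × K)
        = (-t ^ p, b⁻¹ * (t + t ^ p)) + (-t' ^ p, b⁻¹ * (t' + t' ^ p))) := by
  -- `p = 0` is impossible: it would make `a = b⁰ = 1⁰`.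
  have hp : p.Prime := (CharP.char_is_prime_or_zero k p).resolve_right fun hp0 ↦
    ha 1 <| (algebraMap k K).injective <| by rw [← hb, hp0, pow_zero, pow_zero, map_one]
  have : ExpChar k p := .prime hp
  have : ExpChar K p := expChar_of_injective_algebraMap (algebraMap k K).injective p
  have hb0 : b ≠ 0 := by
    rintro rfl
    exact ha 0 ((algebraMap k K).injective (by rw [map_pow, map_zero, hb]))
  simp only [Set.mem_ofPred_eq, ← hb]
  refine ⟨neg_pow_add_pow_mul_inv_pow_eq_zero hb0, fun t ↦ ?_, fun v hv ↦ ?_,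
    fun v _ v' _ ↦ ?_, fun t t' ↦ ?_⟩
  · rw [mul_inv_cancel_left₀ hb0]
    ring
  · rw [add_mul_pow_expChar_eq_neg hv, neg_neg, add_neg_cancel_comm, inv_mul_cancel_left₀ hb0]
  · simp only [Prod.fst_add, Prod.snd_add]
    ring
  · rw [add_add_pow_expChar, add_pow_expChar, neg_add, mul_add, Prod.mk_add_mk]

/-- **`W_a` becomes isomorphic to `𝔾ₐ` over `k(a^{1/p})`.**
Let `k` be a field of characteristic `p > 0`, `a ∈ k ∖ kᵖ`, and `K/k` a field extension
containing `b` with `bᵖ = a`.  With `W_a(K) = {(x,y) ∈ K² : x + xᵖ + a yᵖ = 0}`, the maps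
`φ(x,y) = x + b y` and `ψ(t) = (-tᵖ, b⁻¹ (t + tᵖ))` are mutually inverse isomorphisms of
abelian groups between `W_a(K)` and `(K, +)`; in particular `ψ(t) ∈ W_a(K)` for all `t`. -/
theorem Wa_iso_Ga_over_purely_inseparable {k K : Type*} [Field k] [Field K]
    (p : ℕ) (hp : 0 < p) [CharP k p] [Algebra k K]
    (a : k) (ha : ∀ c : k, c ^ p ≠ a) (b : K) (hb : b ^ p = algebraMap k K a) :
    (∀ t : K, (-t ^ p, b⁻¹ * (t + t ^ p)) ∈
        {v : K × K | v.1 + v.1 ^ p + algebraMap k K a * v.2 ^ p = 0}) ∧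
    (∀ t : K, (-t ^ p : K) + b * (b⁻¹ * (t + t ^ p)) = t) ∧
    (∀ v ∈ {v : K × K | v.1 + v.1 ^ p + algebraMap k K a * v.2 ^ p = 0},
      (-(v.1 + b * v.2) ^ p, b⁻¹ * ((v.1 + b * v.2) + (v.1 + b * v.2) ^ p)) = v) ∧
    (∀ v ∈ {v : K × K | v.1 + v.1 ^ p + algebraMap k K a * v.2 ^ p = 0},
      ∀ v' ∈ {v : K × K | v.1 + v.1 ^ p + algebraMap k K a * v.2 ^ p = 0},
      (v + v').1 + b * (v + v').2 = (v.1 + b * v.2) + (v'.1 + b * v'.2)) ∧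
    (∀ t t' : K,
      ((-(t + t') ^ p, b⁻¹ * ((t + t') + (t + t') ^ p)) : K × K)
        = (-t ^ p, b⁻¹ * (t + t ^ p)) + (-t' ^ p, b⁻¹ * (t' + t' ^ p))) :=
  Wa_iso_Ga_over_purely_inseparable_general p a ha b hb
end

section
/- Let k be a field of characteristic p > 0 and let a ∈ k ∖ k^p. If f, g ∈ k[T] are polynomials in one variable satisfying f + f^p + a·g^p = 0 in k[T], then f and g are both constant polynomials. -/
/-- **The group `W_a` is wound: every morphism `𝔸¹ → W_a` is constant.**
Let `k` be a field of characteristic `p > 0` and `a ∈ k ∖ kᵖ`.  If `f, g ∈ k[T]` satisfy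
`f + fᵖ + a gᵖ = 0` in `k[T]`, then `f` and `g` are constant polynomials. -/
theorem Wa_is_wound {k : Type*} [Field k] (p : ℕ) (hp : 0 < p) [CharP k p]
    (a : k) (ha : ∀ c : k, c ^ p ≠ a)
    (f g : Polynomial k) (hfg : f + f ^ p + Polynomial.C a * g ^ p = 0) :
    (∃ c : k, f = Polynomial.C c) ∧ (∃ d : k, g = Polynomial.C d) := by
  have hprime : p.Prime := (CharP.char_is_prime_or_zero k p).resolve_right hp.ne'
  haveI : Fact p.Prime := ⟨hprime⟩
  have hp2 : 2 ≤ p := hprime.two_le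
  have ha0 : a ≠ 0 := fun h => ha 0 (by rw [h, zero_pow hp.ne'])
  have hkey : ∀ N : ℕ, f.coeff N + (f ^ p).coeff N + a * (g ^ p).coeff N = 0 := by
    intro N
    have := congrArg (fun q : Polynomial k => q.coeff N) hfg
    simpa [Polynomial.coeff_add, Polynomial.coeff_C_mul] using this
  have htop : ∀ q : Polynomial k, (q ^ p).coeff (p * q.natDegree) = q.leadingCoeff ^ p := by
    intro q
    rw [← Polynomial.natDegree_pow, ← Polynomial.leadingCoeff, Polynomial.leadingCoeff_pow]
  set n := f.natDegree with hn
  set m := g.natDegree with hm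
  have hmain : n = 0 ∧ m = 0 := by
    rcases lt_trichotomy n m with h | h | h
    · exfalso
      have hg0 : g ≠ 0 := by
        intro h0
        rw [h0, Polynomial.natDegree_zero] at hm
        omega
      have hc := hkey (p * m)
      have h1 : f.coeff (p * m) = 0 :=
        Polynomial.coeff_eq_zero_of_natDegree_lt (by nlinarith)
      have h2 : (f ^ p).coeff (p * m) = 0 :=
        Polynomial.coeff_eq_zero_of_natDegree_lt
          (by rw [Polynomial.natDegree_pow, ← hn]; exact (Nat.mul_lt_mul_left hp).mpr h)
      rw [h1, h2, htop g, zero_add, zero_add] at hc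
      have : g.leadingCoeff = 0 := by
        have := mul_eq_zero.mp hc
        rcases this with h' | h'
        · exact absurd h' ha0
        · exact pow_eq_zero_iff hp.ne' |>.mp h'
      exact hg0 (Polynomial.leadingCoeff_eq_zero.mp this)
    · rcases Nat.eq_zero_or_pos n with h0 | h0
      · exact ⟨h0, h ▸ h0⟩
      · exfalso
        have hf0 : f ≠ 0 := by
          intro hz
          rw [hz, Polynomial.natDegree_zero] at hn
          omega
        have hg0 : g ≠ 0 := by
          intro hz
          rw [hz, Polynomial.natDegree_zero] at hm
          omega
        have hc := hkey (p * n)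
        have h1 : f.coeff (p * n) = 0 :=
          Polynomial.coeff_eq_zero_of_natDegree_lt (by nlinarith)
        rw [h1, zero_add, htop f] at hc
        have hgc : (g ^ p).coeff (p * n) = g.leadingCoeff ^ p := by
          rw [h, hm]; exact htop g
        rw [hgc] at hc
        -- now f.leadingCoeff ^ p + a * g.leadingCoeff ^ p = 0
        have hlg : g.leadingCoeff ≠ 0 := Polynomial.leadingCoeff_ne_zero.mpr hg0
        apply ha (-f.leadingCoeff / g.leadingCoeff)
        have hneg : (-1 : k) ^ p = -1 := neg_one_pow_char k p
        rw [div_pow, div_eq_iff (pow_ne_zero p hlg)]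
        calc (-f.leadingCoeff) ^ p = (-1) ^ p * f.leadingCoeff ^ p := by ring
          _ = -(f.leadingCoeff ^ p) := by rw [hneg]; ring
          _ = a * g.leadingCoeff ^ p := by linear_combination -hc
    · exfalso
      have hf0 : f ≠ 0 := by
        intro h0
        rw [h0, Polynomial.natDegree_zero] at hn
        omega
      have hc := hkey (p * n)
      have h1 : f.coeff (p * n) = 0 :=
        Polynomial.coeff_eq_zero_of_natDegree_lt (by nlinarith)
      have h2 : (g ^ p).coeff (p * n) = 0 :=
        Polynomial.coeff_eq_zero_of_natDegree_lt
          (by rw [Polynomial.natDegree_pow, ← hm]; exact (Nat.mul_lt_mul_left hp).mpr h)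
      rw [h1, h2, htop f, zero_add, mul_zero, add_zero] at hc
      have : f.leadingCoeff = 0 := pow_eq_zero_iff hp.ne' |>.mp hc
      exact hf0 (Polynomial.leadingCoeff_eq_zero.mp this)
  obtain ⟨hn0, hm0⟩ := hmain
  obtain ⟨c, hc⟩ := Polynomial.natDegree_eq_zero.mp hn0
  obtain ⟨d, hd⟩ := Polynomial.natDegree_eq_zero.mp hm0
  exact ⟨⟨c, hc.symm⟩, ⟨d, hd.symm⟩⟩
end

section
/- Let R be a commutative ring of characteristic p > 0 and let a ∈ R. Define V_a(R) := {(x,y) ∈ R² : x^{p²} − x + a·y^{p²} = 0} and W_a(R) := {(x,y) ∈ R² : x + x^p + a·y^p = 0}; each is a subgroup of (R², +). Define h((x,y), (x',y')) := (x·(x')^p − x^p·x', x·(y')^p − x'·y^p). Then for all v, v' ∈ V_a(R), h(v, v') lies in W_a(R); moreover h is bi-additive (additive in each argument separately) and alternating (h(v,v) = 0 for all v ∈ V_a(R)). -/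
section

variable {R : Type*} [CommRing R] (p : ℕ) (a : R)

/-- The points of `V_a = {X^{p²} - X + a Y^{p²} = 0} ⊆ 𝔾ₐ²` with values in `R`. -/
def VaSet : Set (R × R) := {v | v.1 ^ p ^ 2 - v.1 + a * v.2 ^ p ^ 2 = 0}

/-- The points of `W_a = {X + X^p + a Y^p = 0} ⊆ 𝔾ₐ²` with values in `R`. -/
def WaSet : Set (R × R) := {v | v.1 + v.1 ^ p + a * v.2 ^ p = 0}

/-- Gabber's pairing `h((x,y),(x',y')) = (x (x')^p - x^p x', x (y')^p - x' y^p)`. -/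
def hPair : R × R → R × R → R × R := fun v v' =>
  (v.1 * v'.1 ^ p - v.1 ^ p * v'.1, v.1 * v'.2 ^ p - v'.1 * v.2 ^ p)

end

/-- **Gabber's pairing `h : V_a × V_a → W_a` is well defined, bi-additive, and alternating.**
Let `R` be a commutative ring of characteristic `p > 0` (`p` prime) and `a ∈ R`.  The sets
`V_a(R)` and `W_a(R)` are subgroups of `(R², +)`; for `v, v' ∈ V_a(R)` one has
`h(v, v') ∈ W_a(R)`; `h` is additive in each argument; and `h(v, v) = 0`. -/
theorem hPair_mem_WaSet_biadditive_alternating {R : Type*} [CommRing R]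
    (p : ℕ) (hp : p.Prime) [CharP R p] (a : R) :
    (∃ G : AddSubgroup (R × R), (G : Set (R × R)) = VaSet p a) ∧
    (∃ G : AddSubgroup (R × R), (G : Set (R × R)) = WaSet p a) ∧
    (∀ v ∈ VaSet p a, ∀ v' ∈ VaSet p a, hPair p v v' ∈ WaSet p a) ∧
    (∀ v ∈ VaSet p a, ∀ w ∈ VaSet p a, ∀ v' ∈ VaSet p a,
      hPair p (v + w) v' = hPair p v v' + hPair p w v') ∧
    (∀ v ∈ VaSet p a, ∀ v' ∈ VaSet p a, ∀ w' ∈ VaSet p a,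
      hPair p v (v' + w') = hPair p v v' + hPair p v w') ∧
    (∀ v ∈ VaSet p a, hPair p v v = 0) := by
  haveI := Fact.mk hp
  refine ⟨?_, ?_, ?_, ?_, ?_, ?_⟩
  · refine ⟨(AddMonoidHom.mk' (fun v : R × R => v.1 ^ p ^ 2 - v.1 + a * v.2 ^ p ^ 2)
      (fun v w => by simp only [Prod.fst_add, Prod.snd_add, add_pow_char_pow]; ring)).ker, ?_⟩
    ext v
    simp [AddMonoidHom.mem_ker, VaSet]
  · refine ⟨(AddMonoidHom.mk' (fun v : R × R => v.1 + v.1 ^ p + a * v.2 ^ p)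
      (fun v w => by simp only [Prod.fst_add, Prod.snd_add, add_pow_char]; ring)).ker, ?_⟩
    ext v
    simp [AddMonoidHom.mem_ker, WaSet]
  · rintro ⟨x, y⟩ hv ⟨x', y'⟩ hv'
    simp only [VaSet, Set.mem_setOf_eq] at hv hv'
    simp only [WaSet, hPair, Set.mem_setOf_eq]
    rw [sub_pow_char, sub_pow_char, mul_pow, mul_pow, mul_pow, mul_pow,
      ← pow_mul, ← pow_mul, ← pow_mul, ← pow_mul, ← sq]
    linear_combination (-(x' ^ p)) * hv + x ^ p * hv'
  · rintro ⟨x, y⟩ - ⟨z, w⟩ - ⟨x', y'⟩ -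
    simp only [hPair, Prod.mk_add_mk, Prod.mk.injEq, add_pow_char]
    constructor <;> ring
  · rintro ⟨x, y⟩ - ⟨x', y'⟩ - ⟨z', w'⟩ -
    simp only [hPair, Prod.mk_add_mk, Prod.mk.injEq, add_pow_char]
    constructor <;> ring
  · rintro ⟨x, y⟩ -
    simp only [hPair, Prod.mk_eq_zero]
    constructor <;> ring
end

section
/- Let R be a commutative ring of characteristic p > 0 and let a ∈ R. With V_a(R) := {(x,y) ∈ R² : x^{p²} − x + a·y^{p²} = 0}, W_a(R) := {(x,y) ∈ R² : x + x^p + a·y^p = 0}, and h((x,y),(x',y')) := (x·(x')^p − x^p·x', x·(y')^p − x'·y^p), the operation (w, v)·(w', v') := (w + w' + h(v, v'), v + v') makes the set W_a(R) × V_a(R) into a group, with identity element (0, 0) and with the inverse of (w, v) given by (−w, −v). -/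
section

variable {R : Type*} [CommRing R] (p : ℕ) (a : R)

/-- The underlying set `W_a(R) × V_a(R)` of Gabber's group `U_a`. -/
def UaCarrier : Set ((R × R) × (R × R)) := {x | x.1 ∈ WaSet p a ∧ x.2 ∈ VaSet p a}

/-- The group law `(w, v) · (w', v') = (w + w' + h(v, v'), v + v')` on `W_a(R) × V_a(R)`. -/
def UaMul : (R × R) × (R × R) → (R × R) × (R × R) → (R × R) × (R × R) := fun x y =>
  (x.1 + y.1 + hPair p x.2 y.2, x.2 + y.2)

end

/-- **Gabber's group law.**  Let `R` be a commutative ring of characteristic `p > 0`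
(`p` prime) and `a ∈ R`.  The operation `(w,v)·(w',v') = (w + w' + h(v,v'), v + v')` makes
the set `W_a(R) × V_a(R)` into a group with identity `(0, 0)` and inverse
`(w, v)⁻¹ = (-w, -v)`. -/
theorem Ua_group_law {R : Type*} [CommRing R] (p : ℕ) (hp : p.Prime) [CharP R p] (a : R) :
    (∀ x ∈ UaCarrier p a, ∀ y ∈ UaCarrier p a, UaMul p x y ∈ UaCarrier p a) ∧
    (∀ x ∈ UaCarrier p a, ∀ y ∈ UaCarrier p a, ∀ z ∈ UaCarrier p a,
      UaMul p (UaMul p x y) z = UaMul p x (UaMul p y z)) ∧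
    ((0 : (R × R) × (R × R)) ∈ UaCarrier p a) ∧
    (∀ x ∈ UaCarrier p a, UaMul p 0 x = x ∧ UaMul p x 0 = x) ∧
    (∀ x ∈ UaCarrier p a, -x ∈ UaCarrier p a ∧ UaMul p x (-x) = 0 ∧ UaMul p (-x) x = 0) := by
  haveI := Fact.mk hp
  have hp0 : p ≠ 0 := hp.ne_zero
  have hp20 : p ^ 2 ≠ 0 := pow_ne_zero _ hp0
  have hadd : ∀ u v : R, (u + v) ^ p = u ^ p + v ^ p := fun u v => add_pow_char u v p
  have hadd2 : ∀ u v : R, (u + v) ^ p ^ 2 = u ^ p ^ 2 + v ^ p ^ 2 := fun u v =>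
    add_pow_char_pow u v p 2
  have hsub : ∀ u v : R, (u - v) ^ p = u ^ p - v ^ p := fun u v => sub_pow_char u v
  have hsub2 : ∀ u v : R, (u - v) ^ p ^ 2 = u ^ p ^ 2 - v ^ p ^ 2 := fun u v =>
    sub_pow_char_pow u v 2
  have hneg : ∀ u : R, (-u) ^ p = -(u ^ p) := fun u => by
    rw [← zero_sub, hsub, zero_pow hp0, zero_sub]
  have hneg2 : ∀ u : R, (-u) ^ p ^ 2 = -(u ^ p ^ 2) := fun u => by
    rw [← zero_sub, hsub2, zero_pow hp20, zero_sub]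
  have hz : (0 : R) ^ p = 0 := zero_pow hp0
  have hz2 : (0 : R) ^ p ^ 2 = 0 := zero_pow hp20
  refine ⟨?_, ?_, ?_, ?_, ?_⟩
  · rintro ⟨⟨w1, w2⟩, ⟨x, y⟩⟩ ⟨hw, hv⟩ ⟨⟨w1', w2'⟩, ⟨x', y'⟩⟩ ⟨hw', hv'⟩
    simp only [UaCarrier, UaMul, hPair, WaSet, VaSet, Set.mem_setOf_eq,
      Prod.mk_add_mk, Prod.mk.injEq] at *
    constructor
    · simp only [hadd, hsub, mul_pow]
      linear_combination hw + hw' + x ^ p * hv' - x' ^ p * hv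
    · simp only [hadd2]
      linear_combination hv + hv'
  · rintro ⟨⟨w1, w2⟩, ⟨x, y⟩⟩ - ⟨⟨w1', w2'⟩, ⟨x', y'⟩⟩ - ⟨⟨w1'', w2''⟩, ⟨x'', y''⟩⟩ -
    simp only [UaMul, hPair, Prod.mk_add_mk, Prod.mk.injEq]
    refine ⟨⟨?_, ?_⟩, ?_, ?_⟩ <;> (try simp only [hadd]) <;> ring
  · simp only [UaCarrier, WaSet, VaSet, Set.mem_setOf_eq, Prod.fst_zero, Prod.snd_zero,
      hz, hz2]
    constructor <;> ring
  · rintro ⟨⟨w1, w2⟩, ⟨x, y⟩⟩ -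
    simp only [UaMul, hPair, ← Prod.mk_zero_zero, Prod.mk_add_mk, Prod.mk.injEq, hz]
    refine ⟨⟨⟨?_, ?_⟩, ?_, ?_⟩, ⟨?_, ?_⟩, ?_, ?_⟩ <;> ring
  · rintro ⟨⟨w1, w2⟩, ⟨x, y⟩⟩ ⟨hw, hv⟩
    simp only [UaCarrier, UaMul, hPair, WaSet, VaSet, Set.mem_setOf_eq, ← Prod.mk_zero_zero,
      Prod.neg_mk, Prod.mk_add_mk, Prod.mk.injEq, hneg, hneg2] at hw hv ⊢
    refine ⟨⟨?_, ?_⟩, ⟨⟨?_, ?_⟩, ?_, ?_⟩, ⟨?_, ?_⟩, ?_, ?_⟩ <;>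
      first
        | linear_combination (-1 : R) * hw
        | linear_combination (-1 : R) * hv
        | ring
end
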